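/- Let n ≥ 2 and let Y be the 3-star directed multigraph with 4 vertices: vertex 0 the center, with three edges j ∈ Fin 3 having tail 0 and head j+1 (so deg(0) = 3 and the other vertices have degree 1). Put the weight ω(i) = deg(i) + 2/(n-1) on each vertex, let D = diagonal ω, let 𝓛 = D^(-1/2) * L(Y) * D^(-1/2) be the weighted graph Laplacian, and let M be its Moore–Penrose pseudoinverse. Then trace(M) = (15n² + 18n + 3)/(6n² - 4n - 2). -/

import Mathlib

open Matrix

/-- Incidence matrix of a directed multigraph given by head and tail maps. -/
noncomputable def inc {V E : Type*} [DecidableEq V] (head tail : E → V) : Matrix V E ℝ :=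
  Matrix.of fun i j => (if i = head j then (1 : ℝ) else 0) - (if i = tail j then 1 else 0)

/-- Connectivity: any two vertices are joined by a chain of edges. -/
def Conn {V E : Type*} (head tail : E → V) : Prop :=
  Nonempty V ∧ ∀ a b : V, Relation.ReflTransGen
    (fun x y => ∃ j : E, (head j = x ∧ tail j = y) ∨ (head j = y ∧ tail j = x)) a b

/-- `B` is the Moore–Penrose pseudoinverse of `A`. -/
def IsMP {l m : Type*} [Fintype l] [Fintype m] (A : Matrix l m ℝ) (B : Matrix m l ℝ) : Prop :=
  A * B * A = A ∧ B * A * B = B ∧ (A * B)ᵀ = A * B ∧ (B * A)ᵀ = B * A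

/-- Degree of a vertex (loop edges counted twice). -/
def deg {V E : Type*} [Fintype E] [DecidableEq V] (head tail : E → V) (i : V) : ℕ :=
  (Finset.univ.filter fun j => head j = i).card + (Finset.univ.filter fun j => tail j = i).card

/-- Weighted (normalized) graph Laplacian `D^{-1/2} L D^{-1/2}`. -/
noncomputable def wLap {V E : Type*} [Fintype V] [Fintype E] [DecidableEq V]
    (head tail : E → V) (ω : V → ℝ) : Matrix V V ℝ :=
  Matrix.diagonal (fun i => (Real.sqrt (ω i))⁻¹) * (inc head tail * (inc head tail)ᵀ) *
    Matrix.diagonal (fun i => (Real.sqrt (ω i))⁻¹)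

/-- Tail map of the `n`-part subdivision. -/
def sTail {v' e' : ℕ} (tail' : Fin e' → Fin v') (n : ℕ) :
    Fin e' × Fin n → (Fin v') ⊕ (Fin e' × Fin (n - 1)) :=
  fun p => if h : p.2.val = 0 then Sum.inl (tail' p.1)
    else Sum.inr (p.1, ⟨p.2.val - 1, by have := p.2.isLt; omega⟩)

/-- Head map of the `n`-part subdivision. -/
def sHead {v' e' : ℕ} (head' : Fin e' → Fin v') (n : ℕ) :
    Fin e' × Fin n → (Fin v') ⊕ (Fin e' × Fin (n - 1)) :=
  fun p => if h : p.2.val = n - 1 then Sum.inl (head' p.1)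
    else Sum.inr (p.1, ⟨p.2.val, by have := p.2.isLt; omega⟩)

/- ### auxiliary material -/

lemma mp_unique {l m : Type*} [Fintype l] [Fintype m] {A : Matrix l m ℝ}
    {B B' : Matrix m l ℝ} (h : IsMP A B) (h' : IsMP A B') : B = B' := by
  obtain ⟨h1, h2, h3, h4⟩ := h
  obtain ⟨h1', h2', h3', h4'⟩ := h'
  have e1 : A * B = A * B' := by
    calc A * B = (A * B') * (A * B) := by
          rw [show (A * B') * (A * B) = (A * B' * A) * B by simp only [Matrix.mul_assoc], h1']
      _ = (A * B')ᵀ * (A * B)ᵀ := by rw [h3', h3]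
      _ = ((A * B) * (A * B'))ᵀ := (Matrix.transpose_mul _ _).symm
      _ = ((A * B * A) * B')ᵀ := by simp only [Matrix.mul_assoc]
      _ = (A * B')ᵀ := by rw [h1]
      _ = A * B' := h3'
  have e2 : B * A = B' * A := by
    calc B * A = (B * A) * (B' * A) := by
          rw [show (B * A) * (B' * A) = B * (A * B' * A) by simp only [Matrix.mul_assoc], h1']
      _ = (B * A)ᵀ * (B' * A)ᵀ := by rw [h4, h4']
      _ = ((B' * A) * (B * A))ᵀ := (Matrix.transpose_mul _ _).symm
      _ = (B' * (A * B * A))ᵀ := by simp only [Matrix.mul_assoc]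
      _ = (B' * A)ᵀ := by rw [h1]
      _ = B' * A := h4'
  calc B = B * A * B := h2.symm
    _ = B' * A * B := by rw [e2]
    _ = B' * (A * B') := by rw [Matrix.mul_assoc, e1]
    _ = B' := by rw [← Matrix.mul_assoc]; exact h2'

lemma conj_mul2 {R : Type*} [Ring R] (a b c c' d e : R) (h : c * c' = 1) :
    (a * b * c) * (c' * d * e) = a * (b * d) * e := by
  have h1 : (a * b * c) * (c' * d * e) = a * b * ((c * c') * (d * e)) := by
    simp only [mul_assoc]
  rw [h1, h, one_mul]
  simp only [mul_assoc]

lemma key_swap (A B c1 c2 : ℝ) (hA : A ≠ 0) (hB : B ≠ 0)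
    (h : A * A * c1 = c2 * (B * B)) : A * c1 * B⁻¹ = A⁻¹ * c2 * B := by
  field_simp
  linear_combination h

/-- The (unnormalized) Laplacian of the 3-star. -/
def Lmat : Matrix (Fin 4) (Fin 4) ℝ := !![3,-1,-1,-1; -1,1,0,0; -1,0,1,0; -1,0,0,1]

/-- Numerator matrix of the pseudoinverse (denominator `4*(3*x+1)^2`). -/
def Pmat (x : ℝ) : Matrix (Fin 4) (Fin 4) ℝ :=
  !![3*(x+1)^2, -((3*x-1)*(x+1)), -((3*x-1)*(x+1)), -((3*x-1)*(x+1));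
     -((3*x-1)*(x+1)), 27*x^2+14*x+3, -((9*x+1)*(x+1)), -((9*x+1)*(x+1));
     -((3*x-1)*(x+1)), -((9*x+1)*(x+1)), 27*x^2+14*x+3, -((9*x+1)*(x+1));
     -((3*x-1)*(x+1)), -((9*x+1)*(x+1)), -((9*x+1)*(x+1)), 27*x^2+14*x+3]

set_option maxHeartbeats 1000000 in
lemma aux_LPL (x : ℝ) : Lmat * Pmat x * Lmat = (4*(3*x+1)^2) • Lmat := by
  ext i j
  fin_cases i <;> fin_cases j <;>
    (simp [Lmat, Pmat, Matrix.mul_apply, Fin.sum_univ_succ, Matrix.vecHead, Matrix.vecTail]; ring)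

set_option maxHeartbeats 1000000 in
lemma aux_PLP (x : ℝ) : Pmat x * Lmat * Pmat x = (4*(3*x+1)^2) • Pmat x := by
  ext i j
  fin_cases i <;> fin_cases j <;>
    (simp [Lmat, Pmat, Matrix.mul_apply, Fin.sum_univ_succ, Matrix.vecHead, Matrix.vecTail]; ring)

set_option maxHeartbeats 1000000 in
lemma aux_WPL (x : ℝ) :
    Matrix.diagonal (![3*x-1, x+1, x+1, x+1]) * (Pmat x * Lmat) =
    (Lmat * Pmat x) * Matrix.diagonal (![3*x-1, x+1, x+1, x+1]) := by
  ext i j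
  fin_cases i <;> fin_cases j <;>
    (simp [Lmat, Pmat, Matrix.mul_apply, Fin.sum_univ_succ, Matrix.vecHead, Matrix.vecTail,
      Matrix.diagonal]; ring)

lemma aux_Lsym : Lmatᵀ = Lmat := by
  ext i j
  fin_cases i <;> fin_cases j <;> simp [Lmat, Matrix.vecHead, Matrix.vecTail]

lemma aux_Psym (x : ℝ) : (Pmat x)ᵀ = Pmat x := by
  ext i j
  fin_cases i <;> fin_cases j <;> simp [Pmat, Matrix.vecHead, Matrix.vecTail]

lemma aux_inc : inc (fun j : Fin 3 => (j.succ : Fin 4)) (fun _ : Fin 3 => (0 : Fin 4)) *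
    (inc (fun j : Fin 3 => (j.succ : Fin 4)) (fun _ : Fin 3 => (0 : Fin 4)))ᵀ = Lmat := by
  have h : inc (fun j : Fin 3 => (j.succ : Fin 4)) (fun _ : Fin 3 => (0 : Fin 4)) =
      !![-1,-1,-1; 1,0,0; 0,1,0; 0,0,1] := by
    ext i j
    fin_cases i <;> fin_cases j <;> norm_num [inc] <;> decide
  rw [h]
  ext i j
  fin_cases i <;> fin_cases j <;>
    norm_num [Lmat, Matrix.mul_apply, Fin.sum_univ_succ, Matrix.vecHead, Matrix.vecTail]

lemma aux_deg : ∀ i : Fin 4,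
    deg (fun j : Fin 3 => (j.succ : Fin 4)) (fun _ : Fin 3 => (0 : Fin 4)) i = ![3,1,1,1] i := by
  decide

/-- Trace of the pseudoinverse of the weighted Laplacian of the 3-star graph
with weights `deg + 2/(n-1)`. -/
theorem three_star_weighted_laplacian_trace
    (n : ℕ) (hn : 2 ≤ n)
    (M : Matrix (Fin 4) (Fin 4) ℝ)
    (hM : IsMP (wLap (fun j : Fin 3 => (j.succ : Fin 4)) (fun _ : Fin 3 => (0 : Fin 4))
      (fun i => (deg (fun j : Fin 3 => (j.succ : Fin 4)) (fun _ : Fin 3 => (0 : Fin 4)) i : ℝ)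
        + 2 / ((n : ℝ) - 1))) M) :
    M.trace = (15 * (n : ℝ) ^ 2 + 18 * (n : ℝ) + 3) / (6 * (n : ℝ) ^ 2 - 4 * (n : ℝ) - 2) := by
  set x : ℝ := (n : ℝ) with hxdef
  have hx2 : (2 : ℝ) ≤ x := by rw [hxdef]; exact_mod_cast hn
  have hx1 : (0 : ℝ) < x - 1 := by linarith
  have hx1' : x - 1 ≠ 0 := ne_of_gt hx1
  have h31 : (3 * x + 1) ≠ 0 := by positivity
  have hq : (4 * (3 * x + 1) ^ 2) ≠ 0 := by positivity
  set ω : Fin 4 → ℝ := fun i =>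
    (deg (fun j : Fin 3 => (j.succ : Fin 4)) (fun _ : Fin 3 => (0 : Fin 4)) i : ℝ)
      + 2 / (x - 1) with hωdef
  have hw : ∀ i, ω i = ![3*x-1, x+1, x+1, x+1] i / (x - 1) := by
    intro i
    rw [hωdef]
    simp only [aux_deg i]
    fin_cases i <;> (norm_num; field_simp; ring)
  have hwpos : ∀ i, 0 < ω i := by
    intro i
    rw [hωdef]
    have h2 : 0 < 2 / (x - 1) := by positivity
    exact add_pos_of_nonneg_of_pos (Nat.cast_nonneg _) h2
  have hsq : ∀ i, Real.sqrt (ω i) * Real.sqrt (ω i) = ω i :=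
    fun i => Real.mul_self_sqrt (le_of_lt (hwpos i))
  have hsne : ∀ i, Real.sqrt (ω i) ≠ 0 := fun i => ne_of_gt (Real.sqrt_pos.mpr (hwpos i))
  set S : Matrix (Fin 4) (Fin 4) ℝ := Matrix.diagonal (fun i => Real.sqrt (ω i)) with hSdef
  set T : Matrix (Fin 4) (Fin 4) ℝ :=
    Matrix.diagonal (fun i => (Real.sqrt (ω i))⁻¹) with hTdef
  have hTS : T * S = 1 := by
    rw [hTdef, hSdef, Matrix.diagonal_mul_diagonal]
    rw [show (fun i => (Real.sqrt (ω i))⁻¹ * Real.sqrt (ω i)) = fun _ : Fin 4 => (1:ℝ) from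
      funext fun i => inv_mul_cancel₀ (hsne i)]
    exact Matrix.diagonal_one
  have hST : S * T = 1 := by
    rw [hTdef, hSdef, Matrix.diagonal_mul_diagonal]
    rw [show (fun i => Real.sqrt (ω i) * (Real.sqrt (ω i))⁻¹) = fun _ : Fin 4 => (1:ℝ) from
      funext fun i => mul_inv_cancel₀ (hsne i)]
    exact Matrix.diagonal_one
  have hA : wLap (fun j : Fin 3 => (j.succ : Fin 4)) (fun _ : Fin 3 => (0 : Fin 4)) ω
      = T * Lmat * T := by
    rw [wLap, aux_inc]
  set K : Matrix (Fin 4) (Fin 4) ℝ := (4 * (3 * x + 1) ^ 2)⁻¹ • Pmat x with hKdef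
  have hLKL : Lmat * K * Lmat = Lmat := by
    rw [hKdef, Matrix.mul_smul, Matrix.smul_mul, aux_LPL, smul_smul,
      inv_mul_cancel₀ hq, one_smul]
  have hKLK : K * Lmat * K = K := by
    rw [hKdef, Matrix.smul_mul, Matrix.smul_mul, Matrix.mul_smul, aux_PLP, smul_smul, smul_smul]
    congr 1
    field_simp
  have hKsym : Kᵀ = K := by rw [hKdef, Matrix.transpose_smul, aux_Psym]
  have hentry : ∀ i j, ω i * (K * Lmat) i j = (Lmat * K) i j * ω j := by
    intro i j
    have h : (Matrix.diagonal (![3*x-1, x+1, x+1, x+1]) * (Pmat x * Lmat)) i j =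
        ((Lmat * Pmat x) * Matrix.diagonal (![3*x-1, x+1, x+1, x+1])) i j := by
      rw [aux_WPL x]
    rw [Matrix.diagonal_mul, Matrix.mul_diagonal] at h
    rw [hw i, hw j, hKdef, Matrix.smul_mul, Matrix.mul_smul, Matrix.smul_apply,
      Matrix.smul_apply, smul_eq_mul, smul_eq_mul]
    linear_combination ((4 * (3 * x + 1) ^ 2)⁻¹ * (x - 1)⁻¹) * h
  have hswapM : S * (K * Lmat) * T = T * (Lmat * K) * S := by
    ext i j
    rw [hSdef, hTdef, Matrix.mul_diagonal, Matrix.diagonal_mul, Matrix.mul_diagonal,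
      Matrix.diagonal_mul]
    exact key_swap _ _ _ _ (hsne i) (hsne j) (by rw [hsq i, hsq j]; exact hentry i j)
  have hAM : wLap (fun j : Fin 3 => (j.succ : Fin 4)) (fun _ : Fin 3 => (0 : Fin 4)) ω *
      (S * K * S) = T * (Lmat * K) * S := by
    rw [hA]; exact conj_mul2 T Lmat T S K S hTS
  have hMA : (S * K * S) * wLap (fun j : Fin 3 => (j.succ : Fin 4)) (fun _ : Fin 3 => (0 : Fin 4)) ω
      = S * (K * Lmat) * T := by
    rw [hA]; exact conj_mul2 S K S T Lmat T hST
  have hMP₀ : IsMP (wLap (fun j : Fin 3 => (j.succ : Fin 4)) (fun _ : Fin 3 => (0 : Fin 4)) ω)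
      (S * K * S) := by
    refine ⟨?_, ?_, ?_, ?_⟩
    · rw [hAM, hA, conj_mul2 T (Lmat * K) S T Lmat T hST, hLKL]
    · rw [hMA, conj_mul2 S (K * Lmat) T S K S hTS, hKLK]
    · rw [hAM]
      calc (T * (Lmat * K) * S)ᵀ = S * (K * Lmat) * T := by
            rw [Matrix.transpose_mul, Matrix.transpose_mul, Matrix.transpose_mul, hKsym, aux_Lsym,
              hSdef, hTdef, Matrix.diagonal_transpose, Matrix.diagonal_transpose]
            simp only [Matrix.mul_assoc]
        _ = T * (Lmat * K) * S := hswapM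
    · rw [hMA]
      calc (S * (K * Lmat) * T)ᵀ = T * (Lmat * K) * S := by
            rw [Matrix.transpose_mul, Matrix.transpose_mul, Matrix.transpose_mul, hKsym, aux_Lsym,
              hSdef, hTdef, Matrix.diagonal_transpose, Matrix.diagonal_transpose]
            simp only [Matrix.mul_assoc]
        _ = S * (K * Lmat) * T := hswapM.symm
  rw [mp_unique hM hMP₀]
  have hKd : ∀ i, K i i = (4 * (3 * x + 1) ^ 2)⁻¹ * Pmat x i i := by
    intro i; rw [hKdef, Matrix.smul_apply, smul_eq_mul]
  have hMii : ∀ i, (S * K * S) i i = ω i * K i i := by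
    intro i
    rw [hSdef, Matrix.mul_diagonal, Matrix.diagonal_mul, mul_right_comm, hsq i]
  rw [Matrix.trace, Fin.sum_univ_four]
  simp only [Matrix.diag_apply]
  rw [hMii 0, hMii 1, hMii 2, hMii 3, hKd 0, hKd 1, hKd 2, hKd 3, hw 0, hw 1, hw 2, hw 3]
  have hden : 6 * x ^ 2 - 4 * x - 2 ≠ 0 := by
    have h' : 6 * x ^ 2 - 4 * x - 2 = 2 * ((3 * x + 1) * (x - 1)) := by ring
    rw [h']
    positivity
  rw [eq_div_iff hden]
  simp [Pmat]
  field_simp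
  ring
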